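/- Stability of the one-parameter D2Q9 model, second case (Proposition 4, arbitrary λ): let h̄ > 0, e > 0, τ > 0, g = e²/(3h̄) and λ ∈ ℝ arbitrary. Let D be the 9×9 matrix with D_{0j} = (8+λ)/9 − (4+λ)gh̄/(3e²) for all j, D_{ij} = (1−λ)/18 + (1+λ)gh̄/(6e²) + (ξ_i·ξ_j)/(3e²) for 1 ≤ i ≤ 4, and D_{ij} = (λ−1)/36 + (2−λ)gh̄/(12e²) + (ξ_i·ξ_j)/(12e²) for 5 ≤ i ≤ 8, and set J = (D − I₉)/τ. Then there exist an invertible real matrix P ∈ ℝ^{9×9} and reals λ₁,…,λ₉ with λ₁ = λ₂ = λ₃ = 0 and λ_i > 0 for i = 4,…,9, such that PᵀP is a diagonal matrix and P·J = −diag(λ₁,…,λ₉)·P. -/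
import Mathlib


/-- Dot product on `ℝ × ℝ`. -/
def pdot (a b : ℝ × ℝ) : ℝ := a.1 * b.1 + a.2 * b.2

/-- The D2Q9 lattice velocities with lattice speed `e`. -/
def xi9 (e : ℝ) : Fin 9 → ℝ × ℝ :=
  ![(0, 0), (e, 0), (0, e), (-e, 0), (0, -e), (e, e), (-e, e), (-e, -e), (e, -e)]

/-- The Jacobian of the one-parameter D2Q9 equilibrium distribution at the
rest state `(h̄, 0)`. -/
noncomputable def D9 (g l e hb : ℝ) : Matrix (Fin 9) (Fin 9) ℝ :=
  Matrix.of fun i j =>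
    if i = 0 then (8 + l) / 9 - (4 + l) * g * hb / (3 * e ^ 2)
    else if (i : ℕ) ≤ 4 then
      (1 - l) / 18 + (1 + l) * g * hb / (6 * e ^ 2) + pdot (xi9 e i) (xi9 e j) / (3 * e ^ 2)
    else
      (l - 1) / 36 + (2 - l) * g * hb / (12 * e ^ 2) + pdot (xi9 e i) (xi9 e j) / (12 * e ^ 2)

namespace D2Q9Aux

/-- Integer matrix of (unnormalized) left eigenvectors of the equilibrium Jacobian. -/
def VZ : Matrix (Fin 9) (Fin 9) ℤ :=
  !![1,1,1,1,1,1,1,1,1;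
     0,1,0,-1,0,1,-1,-1,1;
     0,0,1,0,-1,1,1,-1,-1;
     -2,1,1,1,1,4,4,4,4;
     0,1,-1,1,-1,0,0,0,0;
     0,0,0,0,0,1,-1,1,-1;
     0,-1,0,1,0,2,-2,-2,2;
     0,0,-1,0,1,2,2,-2,-2;
     1,-2,-2,-2,-2,4,4,4,4]

/-- `36` times the rational value of `D9` when `g h̄ = e²/3`. -/
def D36Z : Matrix (Fin 9) (Fin 9) ℤ :=
  !![16,16,16,16,16,16,16,16,16;
     4,16,4,-8,4,16,-8,-8,16;
     4,4,16,4,-8,16,16,-8,-8;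
     4,-8,4,16,4,-8,16,16,-8;
     4,4,-8,4,16,-8,-8,16,16;
     1,4,4,-2,-2,7,1,-5,1;
     1,-2,4,4,-2,1,7,1,-5;
     1,-2,-2,4,4,-5,1,7,1;
     1,4,-2,-2,4,1,-5,1,7]

def w36Z : Fin 9 → ℤ := ![16,4,4,4,4,1,1,1,1]
def n4Z : Fin 9 → ℤ := ![4,12,12,1,9,36,6,6,1]
def N36Z : Fin 9 → ℤ := ![36,12,12,144,16,4,24,24,144]
def winv4Z : Fin 9 → ℤ := ![9,36,36,36,36,144,144,144,144]
def mu36Z : Fin 9 → ℤ := ![36,36,36,0,0,0,0,0,0]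

lemma z2 : VZ * D36Z = Matrix.diagonal mu36Z * VZ := by decide

lemma z3 : VZ * Matrix.diagonal w36Z * VZ.transpose = Matrix.diagonal N36Z := by decide

lemma z4 : VZ.transpose * Matrix.diagonal n4Z * VZ = Matrix.diagonal winv4Z := by decide

lemma zNpos : ∀ i : Fin 9, 0 < N36Z i := by decide

lemma zn4N : ∀ i : Fin 9, n4Z i * N36Z i = 144 := by decide

lemma zmu : ∀ i : Fin 9, ((i : ℕ) < 3 → mu36Z i = 36) ∧ (3 ≤ (i : ℕ) → mu36Z i = 0) := by
  decide

noncomputable def VR : Matrix (Fin 9) (Fin 9) ℝ := VZ.map ⇑(Int.castRingHom ℝ)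
noncomputable def D36R : Matrix (Fin 9) (Fin 9) ℝ := D36Z.map ⇑(Int.castRingHom ℝ)

lemma r2 : VR * D36R = Matrix.diagonal (fun i => ((mu36Z i : ℝ))) * VR := by
  have h := congrArg (fun A => A.map ⇑(Int.castRingHom ℝ)) z2
  simp only [Matrix.map_mul] at h
  rw [Matrix.diagonal_map (by norm_num)] at h
  exact h

lemma r3 : VR * Matrix.diagonal (fun i => ((w36Z i : ℝ))) * VR.transpose
    = Matrix.diagonal (fun i => ((N36Z i : ℝ))) := by
  have h := congrArg (fun A => A.map ⇑(Int.castRingHom ℝ)) z3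
  simp only [Matrix.map_mul] at h
  rw [Matrix.transpose_map, Matrix.diagonal_map (by norm_num),
    Matrix.diagonal_map (by norm_num)] at h
  exact h

lemma r4 : VR.transpose * Matrix.diagonal (fun i => ((n4Z i : ℝ))) * VR
    = Matrix.diagonal (fun i => ((winv4Z i : ℝ))) := by
  have h := congrArg (fun A => A.map ⇑(Int.castRingHom ℝ)) z4
  simp only [Matrix.map_mul] at h
  rw [Matrix.transpose_map, Matrix.diagonal_map (by norm_num),
    Matrix.diagonal_map (by norm_num)] at h
  exact h

/-- Generic helper: congruence for diagonal matrices. -/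
lemma diag_congr (f g : Fin 9 → ℝ) (h : ∀ i, f i = g i) :
    Matrix.diagonal f = Matrix.diagonal g := by
  rw [funext h]

/-- Generic helper: difference of diagonal matrices. -/
lemma diag_sub (a b : Fin 9 → ℝ) :
    Matrix.diagonal a - Matrix.diagonal b = Matrix.diagonal (fun i => a i - b i) := by
  ext i j
  by_cases h : i = j <;> simp [Matrix.diagonal_apply, h]

/-- Generic helper: scalar multiple of a diagonal matrix. -/
lemma diag_smul (r : ℝ) (d : Fin 9 → ℝ) :
    r • Matrix.diagonal d = Matrix.diagonal (fun i => r * d i) := by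
  ext i j
  by_cases h : i = j <;> simp [Matrix.diagonal_apply, h]

set_option maxHeartbeats 1000000 in
/-- Evaluation of `D9` at `g = e²/(3 h̄)`: it is the constant rational matrix `D36Z / 36`. -/
lemma hD9 (hb e l : ℝ) (hhb : 0 < hb) (he : 0 < e) :
    D9 (e ^ 2 / (3 * hb)) l e hb = (36 : ℝ)⁻¹ • D36R := by
  have he' := he.ne'
  have hhb' := hhb.ne'
  rw [← Matrix.ext_iff]
  simp only [Fin.forall_fin_succ, IsEmpty.forall_iff, and_true, D9, Matrix.of_apply, xi9, pdot,
    Matrix.smul_apply, Matrix.map_apply, D36R, D36Z, Matrix.cons_val_zero,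
    Matrix.cons_val_succ, Fin.succ_ne_zero, if_false, if_true, Fin.val_succ, Fin.val_zero,
    Matrix.cons_val', Matrix.cons_val_fin_one, Matrix.empty_val', Matrix.head_cons,
    Matrix.head_fin_const, Int.cast_ofNat, Int.cast_one, Int.cast_neg, smul_eq_mul]
  norm_num
  repeat' apply And.intro
  all_goals (field_simp; ring)

end D2Q9Aux

open D2Q9Aux in
/-- Proposition 4, second case (arbitrary `λ`, `g = e²/(3h̄)`): stability structure
for the one-parameter D2Q9 shallow water model. -/
theorem d2q9_lambda_stability_case_two (hb e g τ l : ℝ) (hhb : 0 < hb) (he : 0 < e)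
    (hτ : 0 < τ) (hg : g = e ^ 2 / (3 * hb)) :
    ∃ (P : Matrix (Fin 9) (Fin 9) ℝ) (lam : Fin 9 → ℝ),
      IsUnit P ∧
      (∃ a : Fin 9 → ℝ, P.transpose * P = Matrix.diagonal a) ∧
      (∀ i : Fin 9, (i : ℕ) < 3 → lam i = 0) ∧
      (∀ i : Fin 9, 3 ≤ (i : ℕ) → 0 < lam i) ∧
      P * (τ⁻¹ • (D9 g l e hb - 1)) = -(Matrix.diagonal lam) * P := by
  subst hg
  have hτ' : τ ≠ 0 := hτ.ne'
  have hNpos : ∀ i : Fin 9, (0:ℝ) < ((N36Z i : ℝ)) := by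
    intro i
    exact_mod_cast zNpos i
  set s : Fin 9 → ℝ := fun i => Real.sqrt ((N36Z i : ℝ)) with hsdef
  have hss : ∀ i, s i * s i = ((N36Z i : ℝ)) := fun i => Real.mul_self_sqrt (hNpos i).le
  have hspos : ∀ i, 0 < s i := fun i => Real.sqrt_pos.mpr (hNpos i)
  have hs0 : ∀ i, s i ≠ 0 := fun i => (hspos i).ne'
  refine ⟨Matrix.diagonal (fun i => (s i)⁻¹) * VR,
    fun i => if (i : ℕ) < 3 then 0 else τ⁻¹, ?_, ?_, ?_, ?_, ?_⟩
  · -- `IsUnit P`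
    set P := Matrix.diagonal (fun i => (s i)⁻¹) * VR with hP
    have hPB : P * (Matrix.diagonal (fun i => ((w36Z i : ℝ))) *
        (VR.transpose * Matrix.diagonal (fun i => (s i)⁻¹))) = 1 := by
      rw [hP]
      have hassoc : Matrix.diagonal (fun i => (s i)⁻¹) * VR *
          (Matrix.diagonal (fun i => ((w36Z i : ℝ))) *
            (VR.transpose * Matrix.diagonal (fun i => (s i)⁻¹)))
          = Matrix.diagonal (fun i => (s i)⁻¹) *
            (VR * Matrix.diagonal (fun i => ((w36Z i : ℝ))) * VR.transpose) *
            Matrix.diagonal (fun i => (s i)⁻¹) := by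
        noncomm_ring
      rw [hassoc, r3, Matrix.diagonal_mul_diagonal, Matrix.diagonal_mul_diagonal]
      rw [diag_congr _ (fun _ => (1 : ℝ)) ?_]
      · exact Matrix.diagonal_one
      · intro i
        rw [← hss i]
        calc (s i)⁻¹ * (s i * s i) * (s i)⁻¹
            = ((s i)⁻¹ * s i) * (s i * (s i)⁻¹) := by ring
          _ = 1 := by rw [inv_mul_cancel₀ (hs0 i), mul_inv_cancel₀ (hs0 i), mul_one]
    exact ⟨⟨P, _, hPB, mul_eq_one_comm.mp hPB⟩, rfl⟩
  · -- `PᵀP` diagonal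
    refine ⟨fun i => ((winv4Z i : ℝ)) / 144, ?_⟩
    rw [Matrix.transpose_mul, Matrix.diagonal_transpose]
    have hinv : ∀ i, (s i)⁻¹ * (s i)⁻¹ = (144 : ℝ)⁻¹ * ((n4Z i : ℝ)) := by
      intro i
      have h144 : ((n4Z i : ℝ)) * ((N36Z i : ℝ)) = 144 := by
        exact_mod_cast zn4N i
      rw [← mul_inv, hss i]
      refine inv_eq_of_mul_eq_one_left ?_
      rw [show (144 : ℝ)⁻¹ * ((n4Z i : ℝ)) * ((N36Z i : ℝ))
          = ((n4Z i : ℝ)) * ((N36Z i : ℝ)) * (144 : ℝ)⁻¹ from by ring, h144]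
      norm_num
    calc VR.transpose * Matrix.diagonal (fun i => (s i)⁻¹) *
          (Matrix.diagonal (fun i => (s i)⁻¹) * VR)
        = VR.transpose * (Matrix.diagonal (fun i => (s i)⁻¹) *
            Matrix.diagonal (fun i => (s i)⁻¹)) * VR := by noncomm_ring
      _ = VR.transpose * ((144 : ℝ)⁻¹ • Matrix.diagonal (fun i => ((n4Z i : ℝ)))) * VR := by
          rw [Matrix.diagonal_mul_diagonal, diag_congr _ _ hinv, ← diag_smul]
      _ = (144 : ℝ)⁻¹ • (VR.transpose * Matrix.diagonal (fun i => ((n4Z i : ℝ))) * VR) := by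
          rw [Matrix.mul_smul, Matrix.smul_mul]
      _ = (144 : ℝ)⁻¹ • Matrix.diagonal (fun i => ((winv4Z i : ℝ))) := by rw [r4]
      _ = Matrix.diagonal (fun i => ((winv4Z i : ℝ)) / 144) := by
          rw [diag_smul]
          exact diag_congr _ _ (fun i => by ring)
  · -- `lam i = 0` for `i < 3`
    intro i hi
    simp [hi]
  · -- `0 < lam i` for `3 ≤ i`
    intro i hi
    have h3 : ¬((i : ℕ) < 3) := by omega
    simp only [h3, if_false]
    exact inv_pos.mpr hτ
  · -- the eigenvalue equation
    rw [hD9 hb e l hhb he]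
    set P := Matrix.diagonal (fun i => (s i)⁻¹) * VR with hP
    have hPD : P * ((36 : ℝ)⁻¹ • D36R)
        = Matrix.diagonal (fun i => ((mu36Z i : ℝ)) / 36) * P := by
      rw [Matrix.mul_smul, hP, Matrix.mul_assoc, r2, ← Matrix.mul_assoc,
        Matrix.diagonal_mul_diagonal, ← Matrix.smul_mul, diag_smul, ← Matrix.mul_assoc,
        Matrix.diagonal_mul_diagonal]
      rw [diag_congr (fun i => (36 : ℝ)⁻¹ * ((s i)⁻¹ * ((mu36Z i : ℝ))))
        (fun i => ((mu36Z i : ℝ)) / 36 * (s i)⁻¹) (fun i => by ring)]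
    have key : -(Matrix.diagonal (fun i : Fin 9 => if (i : ℕ) < 3 then 0 else τ⁻¹))
        = τ⁻¹ • (Matrix.diagonal (fun i => ((mu36Z i : ℝ)) / 36) - 1) := by
      rw [show (1 : Matrix (Fin 9) (Fin 9) ℝ) = Matrix.diagonal (fun _ => (1 : ℝ)) from
        Matrix.diagonal_one.symm, diag_sub, diag_smul, Matrix.diagonal_neg]
      refine diag_congr _ _ (fun i => ?_)
      by_cases hi : (i : ℕ) < 3
      · have h36 : mu36Z i = 36 := (zmu i).1 hi
        rw [if_pos hi, h36]
        norm_num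
      · have h0 : mu36Z i = 0 := (zmu i).2 (by omega)
        rw [if_neg hi, h0]
        norm_num
    rw [Matrix.mul_smul, Matrix.mul_sub, Matrix.mul_one, hPD, key, Matrix.smul_mul,
      Matrix.sub_mul, Matrix.one_mul]
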